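/- For 1 < p < ∞ and any g ∈ L^p([0,1]^n), if Φ̄(ξ) = (1/n)Σ_{i=1}^n Φ_i(ξ_i) is such that h(ξ) := sign(Φ̄(ξ))|Φ̄(ξ)|^{1/(p−1)} has the same marginals as g, then ‖Φ̄‖_q ≤ ‖g‖_p^{p−1}, where q = p/(p−1). -/

import Mathlib

open MeasureTheory

/-- Lebesgue measure restricted to the unit interval. -/
noncomputable def lineMeasure : Measure ℝ := volume.restrict (Set.Icc (0:ℝ) 1)

/-- The (product) Lebesgue measure on the unit hypercube `[0,1]^n`. -/
noncomputable def cubeMeasure (n : ℕ) : Measure (Fin n → ℝ) :=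
  Measure.pi fun _ => lineMeasure

/-- The `i`-th marginal of `g`: the integral of `g` over all coordinates except the `i`-th
(since `cubeMeasure n` is a product of probability measures, integrating the updated function
over the full cube agrees with integrating over `ξ_i^c`). -/
noncomputable def marginal {n : ℕ} (g : (Fin n → ℝ) → ℝ) (i : Fin n) (x : ℝ) : ℝ :=
  ∫ ξ, g (Function.update ξ i x) ∂(cubeMeasure n)

open scoped ENNReal NNReal

instance : IsProbabilityMeasure lineMeasure :=
  ⟨by simp [lineMeasure, Real.volume_Icc]⟩

instance (n : ℕ) : IsProbabilityMeasure (cubeMeasure n) := by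
  unfold cubeMeasure; infer_instance

lemma stmt17_measurable_sign : Measurable Real.sign := by
  have : (Real.sign : ℝ → ℝ) = fun r => if r < 0 then -1 else if 0 < r then 1 else 0 := by
    funext r; rfl
  rw [this]
  exact Measurable.ite measurableSet_Iio measurable_const
    (Measurable.ite measurableSet_Ioi measurable_const measurable_const)

lemma stmt17_mpUpdate (n : ℕ) (i : Fin n) :
    MeasurePreserving (fun z : ℝ × (Fin n → ℝ) => Function.update z.2 i z.1)
      (lineMeasure.prod (cubeMeasure n)) (cubeMeasure n) := by
  classical
  have hU : Measurable (fun z : ℝ × (Fin n → ℝ) => Function.update z.2 i z.1) :=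
    measurable_update'.comp measurable_swap
  constructor
  · exact hU
  · show _ = cubeMeasure n
    rw [cubeMeasure]
    refine (Measure.pi_eq (μ := fun _ : Fin n => lineMeasure) fun s hs => ?_).symm
    rw [Measure.map_apply hU (MeasurableSet.univ_pi hs)]
    have hpre : (fun z : ℝ × (Fin n → ℝ) => Function.update z.2 i z.1) ⁻¹' Set.pi Set.univ s
        = (s i) ×ˢ Set.pi Set.univ (Function.update s i Set.univ) := by
      ext z
      simp only [Set.mem_preimage, Set.mem_pi, Set.mem_univ, forall_true_left, Set.mem_prod,
        Function.update_apply]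
      constructor
      · intro H
        refine ⟨by simpa using H i, fun j => ?_⟩
        by_cases hj : j = i
        · simp [hj]
        · simpa [hj] using H j
      · intro H j
        by_cases hj : j = i
        · subst hj; simpa using H.1
        · simpa [hj] using H.2 j
    rw [hpre, Measure.prod_prod, Measure.pi_pi]
    have hterm : ∀ j, lineMeasure (Function.update s i Set.univ j)
        = Function.update (fun k => lineMeasure (s k)) i 1 j := by
      intro j
      have := Function.apply_update (fun _ t => lineMeasure t) s i Set.univ j
      simpa [measure_univ] using this
    simp_rw [hterm]
    rw [Finset.prod_update_of_mem (Finset.mem_univ i), one_mul,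
      ← Finset.prod_erase_mul _ _ (Finset.mem_univ i), Finset.erase_eq, mul_comm]

lemma stmt17_mpEval (n : ℕ) (i : Fin n) :
    MeasurePreserving (fun ξ : Fin n → ℝ => ξ i) (cubeMeasure n) lineMeasure := by
  have hU : Measurable (fun z : ℝ × (Fin n → ℝ) => Function.update z.2 i z.1) :=
    measurable_update'.comp measurable_swap
  constructor
  · exact measurable_pi_apply i
  · calc Measure.map (fun ξ : Fin n → ℝ => ξ i) (cubeMeasure n)
        = Measure.map (fun ξ : Fin n → ℝ => ξ i)
            (Measure.map (fun z : ℝ × (Fin n → ℝ) => Function.update z.2 i z.1)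
              (lineMeasure.prod (cubeMeasure n))) := by rw [(stmt17_mpUpdate n i).map_eq]
      _ = Measure.map ((fun ξ : Fin n → ℝ => ξ i) ∘
            (fun z : ℝ × (Fin n → ℝ) => Function.update z.2 i z.1))
            (lineMeasure.prod (cubeMeasure n)) :=
          Measure.map_map (measurable_pi_apply i) hU
      _ = Measure.map Prod.fst (lineMeasure.prod (cubeMeasure n)) := by
            congr 1; funext z; simp
      _ = lineMeasure := by simp
theorem stmt17 (n : ℕ) (hn : 2 ≤ n) (p q : ℝ) (hp : 1 < p) (hq : q = p / (p - 1))
    (g : (Fin n → ℝ) → ℝ) (hg : MemLp g (ENNReal.ofReal p) (cubeMeasure n))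
    (Φ : Fin n → ℝ → ℝ)
    (hh : MemLp (fun ξ : Fin n → ℝ =>
        Real.sign ((1 / (n : ℝ)) * ∑ i : Fin n, Φ i (ξ i)) *
          |(1 / (n : ℝ)) * ∑ i : Fin n, Φ i (ξ i)| ^ (1 / (p - 1)))
      (ENNReal.ofReal p) (cubeMeasure n))
    (hmarg : ∀ i : Fin n, marginal (fun ξ : Fin n → ℝ =>
        Real.sign ((1 / (n : ℝ)) * ∑ i : Fin n, Φ i (ξ i)) *
          |(1 / (n : ℝ)) * ∑ i : Fin n, Φ i (ξ i)| ^ (1 / (p - 1))) i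
        =ᵐ[lineMeasure] marginal g i) :
    eLpNorm (fun ξ : Fin n → ℝ => (1 / (n : ℝ)) * ∑ i : Fin n, Φ i (ξ i))
        (ENNReal.ofReal q) (cubeMeasure n)
      ≤ eLpNorm g (ENNReal.ofReal p) (cubeMeasure n) ^ (p - 1) := by
  classical
  have hp0 : (0:ℝ) < p := lt_trans one_pos hp
  have hp1 : (0:ℝ) < p - 1 := sub_pos.mpr hp
  have hpq : p.HolderConjugate q := (Real.holderConjugate_iff_eq_conjExponent hp).2 hq
  have hq1 : 1 < q := hpq.symm.lt
  have hq0 : (0:ℝ) < q := hpq.symm.pos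
  have hn0 : (n:ℝ) ≠ 0 := Nat.cast_ne_zero.2 (by omega)
  have hc0 : (1:ℝ) / (p - 1) ≠ 0 := by positivity
  set μ := cubeMeasure n with hμdef
  set ν := lineMeasure with hνdef
  set F : (Fin n → ℝ) → ℝ := fun ξ => (1 / (n : ℝ)) * ∑ i : Fin n, Φ i (ξ i) with hFdef
  set h : (Fin n → ℝ) → ℝ := fun ξ : Fin n → ℝ =>
      Real.sign ((1 / (n : ℝ)) * ∑ i : Fin n, Φ i (ξ i)) *
        |(1 / (n : ℝ)) * ∑ i : Fin n, Φ i (ξ i)| ^ (1 / (p - 1)) with hhdef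
  have hF_eq : ∀ ξ, h ξ = Real.sign (F ξ) * |F ξ| ^ (1 / (p - 1)) := fun ξ => rfl
  have hpne : ENNReal.ofReal p ≠ 0 := by simp [ENNReal.ofReal_eq_zero, not_le, hp0]
  have hqne : ENNReal.ofReal q ≠ 0 := by simp [ENNReal.ofReal_eq_zero, not_le, hq0]
  have hpnetop : ENNReal.ofReal p ≠ ⊤ := ENNReal.ofReal_ne_top
  have hqnetop : ENNReal.ofReal q ≠ ⊤ := ENNReal.ofReal_ne_top
  have hconj : 1 / (ENNReal.ofReal p) + 1 / (ENNReal.ofReal q) = 1 := by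
    rw [one_div, one_div, ← ENNReal.ofReal_inv_of_pos hp0, ← ENNReal.ofReal_inv_of_pos hq0,
      ← ENNReal.ofReal_add (by positivity) (by positivity), hpq.inv_add_inv_eq_one,
      ENNReal.ofReal_one]
  -- pointwise identities
  have habs : ∀ ξ, |h ξ| = |F ξ| ^ (1 / (p - 1)) := by
    intro ξ
    rw [hF_eq ξ, abs_mul, abs_of_nonneg (Real.rpow_nonneg (abs_nonneg _) _)]
    rcases lt_trichotomy (F ξ) 0 with hc | hc | hc
    · rw [Real.sign_of_neg hc]; simp
    · simp [hc, Real.zero_rpow hc0, Real.zero_rpow (show ((p-1):ℝ)⁻¹ ≠ 0 by positivity)]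
    · rw [Real.sign_of_pos hc]; simp
  have hsf : ∀ ξ, Real.sign (F ξ) * F ξ = |F ξ| := by
    intro ξ
    rcases lt_trichotomy (F ξ) 0 with hc | hc | hc
    · rw [Real.sign_of_neg hc, abs_of_neg hc]; ring
    · simp [hc]
    · rw [Real.sign_of_pos hc, abs_of_pos hc]; ring
  have hprod : ∀ ξ, h ξ * F ξ = |F ξ| ^ q := by
    intro ξ
    rcases eq_or_ne (F ξ) 0 with hc | hc
    · rw [hF_eq ξ, hc]; simp [Real.zero_rpow (ne_of_gt hq0)]
    · have habs0 : 0 < |F ξ| := abs_pos.mpr hc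
      calc h ξ * F ξ = |F ξ| ^ (1/(p-1)) * (Real.sign (F ξ) * F ξ) := by rw [hF_eq ξ]; ring
        _ = |F ξ| ^ (1/(p-1)) * |F ξ| ^ (1:ℝ) := by rw [hsf ξ, Real.rpow_one]
        _ = |F ξ| ^ (1/(p-1) + 1) := (Real.rpow_add habs0 _ _).symm
        _ = |F ξ| ^ q := by rw [hq]; congr 1; field_simp; ring
  have hpow : ∀ ξ, ‖h ξ‖ ^ p = ‖F ξ‖ ^ q := by
    intro ξ
    rw [Real.norm_eq_abs, Real.norm_eq_abs, habs ξ, ← Real.rpow_mul (abs_nonneg _)]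
    congr 1
    rw [hq]; field_simp
  -- F in terms of h
  have hpsi : ∀ ξ, F ξ = Real.sign (h ξ) * |h ξ| ^ (p - 1) := by
    intro ξ
    have hexp : ∀ y : ℝ, 0 ≤ y → (y ^ ((1:ℝ) / (p - 1))) ^ (p - 1) = y := by
      intro y hy
      rw [← Real.rpow_mul hy]
      rw [one_div, inv_mul_cancel₀ (ne_of_gt hp1), Real.rpow_one]
    rcases lt_trichotomy (F ξ) 0 with hc | hc | hc
    · have habs0 : 0 < |F ξ| := abs_pos.mpr (ne_of_lt hc)
      have h1 : 0 < |F ξ| ^ ((1:ℝ)/(p-1)) := Real.rpow_pos_of_pos habs0 _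
      have hneg : h ξ < 0 := by
        rw [hF_eq ξ, Real.sign_of_neg hc]; nlinarith
      rw [Real.sign_of_neg hneg, habs ξ, hexp _ (abs_nonneg _), abs_of_neg hc]; ring
    · rw [habs ξ, hc, abs_zero, Real.zero_rpow hc0, Real.zero_rpow (ne_of_gt hp1), mul_zero]
    · have habs0 : 0 < |F ξ| := abs_pos.mpr (ne_of_gt hc)
      have h1 : 0 < |F ξ| ^ ((1:ℝ)/(p-1)) := Real.rpow_pos_of_pos habs0 _
      have hposh : 0 < h ξ := by
        rw [hF_eq ξ, Real.sign_of_pos hc]; nlinarith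
      rw [Real.sign_of_pos hposh, habs ξ, hexp _ (abs_nonneg _), abs_of_pos hc]; ring
  -- F is a.e. strongly measurable
  have hψm : Measurable fun y : ℝ => Real.sign y * |y| ^ (p - 1) :=
    stmt17_measurable_sign.mul (continuous_abs.rpow_const fun x => Or.inr hp1.le).measurable
  have hFaesm : AEStronglyMeasurable F μ := by
    obtain ⟨m, hm, hhm⟩ := hh.1
    refine ⟨fun ξ => Real.sign (m ξ) * |m ξ| ^ (p - 1),
      (hψm.comp hm.measurable).stronglyMeasurable, ?_⟩
    filter_upwards [hhm] with ξ hξ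
    rw [hpsi ξ, hξ]
  -- lintegral identity
  have hFq_lintegral : ∫⁻ ξ, (‖F ξ‖₊ : ℝ≥0∞) ^ q ∂μ = ∫⁻ ξ, (‖h ξ‖₊ : ℝ≥0∞) ^ p ∂μ := by
    apply lintegral_congr
    intro ξ
    rw [← enorm_eq_nnnorm, ← ofReal_norm, ← enorm_eq_nnnorm, ← ofReal_norm,
      ENNReal.ofReal_rpow_of_nonneg (norm_nonneg _) hq0.le,
      ENNReal.ofReal_rpow_of_nonneg (norm_nonneg _) hp0.le, hpow ξ]
  have heLp : eLpNorm F (ENNReal.ofReal q) μ = eLpNorm h (ENNReal.ofReal p) μ ^ (p - 1) := by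
    rw [eLpNorm_eq_lintegral_rpow_enorm_toReal hqne hqnetop,
      eLpNorm_eq_lintegral_rpow_enorm_toReal hpne hpnetop,
      ENNReal.toReal_ofReal hq0.le, ENNReal.toReal_ofReal hp0.le]
    simp only [enorm_eq_nnnorm]
    rw [hFq_lintegral,
      ← ENNReal.rpow_mul]
    congr 1
    rw [hq]; field_simp
  have hFq : MemLp F (ENNReal.ofReal q) μ :=
    ⟨hFaesm, by rw [heLp]; exact ENNReal.rpow_lt_top_of_nonneg hp1.le hh.2.ne⟩
  -- each Φ i composed with evaluation is in L^q
  have hΦq : ∀ i, MemLp (fun ξ : Fin n → ℝ => Φ i (ξ i)) (ENNReal.ofReal q) μ := by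
    intro i
    have mpU := stmt17_mpUpdate n i
    have hFU : MemLp (F ∘ fun z : ℝ × (Fin n → ℝ) => Function.update z.2 i z.1)
        (ENNReal.ofReal q) (ν.prod μ) := hFq.comp_measurePreserving mpU
    have hint : Integrable
        (fun z : ℝ × (Fin n → ℝ) => ‖F (Function.update z.2 i z.1)‖ ^ q) (ν.prod μ) := by
      have := hFU.integrable_norm_rpow hqne hqnetop
      simpa [Function.comp, ENNReal.toReal_ofReal hq0.le] using this
    have hslice1 : ∀ᵐ ξ ∂μ, Integrable (fun x => ‖F (Function.update ξ i x)‖ ^ q) ν :=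
      hint.prod_left_ae
    obtain ⟨m2, hm2, hm2e⟩ := hFU.1
    have hm2e' : ∀ᵐ ξ ∂μ, ∀ᵐ x ∂ν, F (Function.update ξ i x) = m2 (x, ξ) := by
      have hswap := (Measure.measurePreserving_swap (μ := μ) (ν := ν)).quasiMeasurePreserving
      have h2 := hswap.ae_eq_comp hm2e
      have h3 : ∀ᵐ z ∂(μ.prod ν), F (Function.update z.1 i z.2) = m2 (z.2, z.1) := h2
      exact Measure.ae_ae_of_ae_prod h3
    have hslice2 : ∀ᵐ ξ ∂μ, AEStronglyMeasurable (fun x => F (Function.update ξ i x)) ν := by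
      filter_upwards [hm2e'] with ξ hξ
      exact ⟨fun x => m2 (x, ξ),
        hm2.comp_measurable (measurable_id.prodMk measurable_const), hξ⟩
    obtain ⟨ξ0, hint0, haesm0⟩ := (hslice1.and hslice2).exists
    have hsliceLp : MemLp (fun x => F (Function.update ξ0 i x)) (ENNReal.ofReal q) ν := by
      refine ⟨haesm0, ?_⟩
      have h1 := (memLp_one_iff_integrable.mpr hint0).2
      rw [eLpNorm_norm_rpow _ hq0, one_mul] at h1
      exact (ENNReal.rpow_lt_top_iff_of_pos hq0).mp h1
    have hΦeq : Φ i = fun x =>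
        (n : ℝ) * F (Function.update ξ0 i x) - ∑ j ∈ Finset.univ \ {i}, Φ j (ξ0 j) := by
      funext x
      have hterm : ∀ j, Φ j (Function.update ξ0 i x j)
          = Function.update (fun k => Φ k (ξ0 k)) i (Φ i x) j := fun j =>
        Function.apply_update (fun k y => Φ k y) ξ0 i x j
      have hsum : ∑ j : Fin n, Φ j (Function.update ξ0 i x j)
          = Φ i x + ∑ j ∈ Finset.univ \ {i}, Φ j (ξ0 j) := by
        simp_rw [hterm]
        exact Finset.sum_update_of_mem (Finset.mem_univ i) (fun k => Φ k (ξ0 k)) (Φ i x)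
      have hFval : F (Function.update ξ0 i x)
          = (1 / (n:ℝ)) * (Φ i x + ∑ j ∈ Finset.univ \ {i}, Φ j (ξ0 j)) := by
        rw [hFdef]; simp only []; rw [hsum]
      rw [hFval]; field_simp; ring
    have hΦiq : MemLp (Φ i) (ENNReal.ofReal q) ν := by
      rw [hΦeq]
      exact (hsliceLp.const_mul _).sub (memLp_const _)
    have := hΦiq.comp_measurePreserving (stmt17_mpEval n i)
    exact this
  -- integrability of products
  have hmul : ∀ (w : (Fin n → ℝ) → ℝ), MemLp w (ENNReal.ofReal p) μ →
      ∀ i : Fin n, Integrable (fun ξ => w ξ * Φ i (ξ i)) μ := by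
    intro w hw i
    have hsm := MemLp.smul (r := 1) (hΦq i) hw (hpqr := ⟨by simpa [one_div] using hconj⟩)
    rw [memLp_one_iff_integrable] at hsm
    exact hsm
  -- key integral identity
  have key : ∀ (w : (Fin n → ℝ) → ℝ), MemLp w (ENNReal.ofReal p) μ →
      ∫ ξ, w ξ * F ξ ∂μ = (1/(n:ℝ)) * ∑ i : Fin n, ∫ x, (marginal w i x) * Φ i x ∂ν := by
    intro w hw
    have hterm : ∀ i : Fin n, ∫ ξ, w ξ * Φ i (ξ i) ∂μ = ∫ x, (marginal w i x) * Φ i x ∂ν := by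
      intro i
      have mpU := stmt17_mpUpdate n i
      rw [← hμdef, ← hνdef] at mpU
      have hiw : Integrable (fun ξ => w ξ * Φ i (ξ i)) μ := hmul w hw i
      have hiw' : Integrable (fun ξ => w ξ * Φ i (ξ i))
          (Measure.map (fun z : ℝ × (Fin n → ℝ) => Function.update z.2 i z.1) (ν.prod μ)) := by
        rwa [mpU.map_eq]
      have h2 : Integrable ((fun ξ => w ξ * Φ i (ξ i)) ∘
          fun z : ℝ × (Fin n → ℝ) => Function.update z.2 i z.1) (ν.prod μ) :=
        (integrable_map_measure hiw'.aestronglyMeasurable mpU.measurable.aemeasurable).mp hiw'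
      have h3 : Integrable (fun z : ℝ × (Fin n → ℝ) =>
          w (Function.update z.2 i z.1) * Φ i z.1) (ν.prod μ) := by
        refine h2.congr (Filter.Eventually.of_forall fun z => ?_)
        simp only [Function.comp_apply, Function.update_self]
      calc ∫ ξ, w ξ * Φ i (ξ i) ∂μ
          = ∫ z, w (Function.update z.2 i z.1) * Φ i ((Function.update z.2 i z.1) i)
              ∂(ν.prod μ) := by
            have h4 := integral_map (φ := fun z : ℝ × (Fin n → ℝ) => Function.update z.2 i z.1)
              mpU.measurable.aemeasurable hiw'.aestronglyMeasurable
            rw [mpU.map_eq] at h4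
            exact h4
        _ = ∫ z : ℝ × (Fin n → ℝ), w (Function.update z.2 i z.1) * Φ i z.1 ∂(ν.prod μ) := by
            refine integral_congr_ae (Filter.Eventually.of_forall fun z => ?_)
            beta_reduce
            rw [Function.update_self]
        _ = ∫ x, ∫ ξ, w (Function.update ξ i x) * Φ i x ∂μ ∂ν := integral_prod _ h3
        _ = ∫ x, (marginal w i x) * Φ i x ∂ν := by
            refine integral_congr_ae (Filter.Eventually.of_forall fun x => ?_)
            beta_reduce
            rw [integral_mul_const]
            rfl
    calc ∫ ξ, w ξ * F ξ ∂μ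
        = ∫ ξ, (1/(n:ℝ)) * ∑ i : Fin n, (w ξ * Φ i (ξ i)) ∂μ := by
          refine integral_congr_ae (Filter.Eventually.of_forall fun ξ => ?_)
          beta_reduce
          have hFξ : F ξ = (1/(n:ℝ)) * ∑ i : Fin n, Φ i (ξ i) := rfl
          rw [hFξ]
          simp only [Finset.mul_sum]
          exact Finset.sum_congr rfl fun j _ => by ring
      _ = (1/(n:ℝ)) * ∫ ξ, ∑ i : Fin n, (w ξ * Φ i (ξ i)) ∂μ := integral_const_mul _ _
      _ = (1/(n:ℝ)) * ∑ i : Fin n, ∫ ξ, w ξ * Φ i (ξ i) ∂μ := by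
          rw [integral_finset_sum _ fun i _ => hmul w hw i]
      _ = (1/(n:ℝ)) * ∑ i : Fin n, ∫ x, (marginal w i x) * Φ i x ∂ν := by
          rw [Finset.sum_congr rfl fun i _ => hterm i]
  have hsame : ∫ ξ, h ξ * F ξ ∂μ = ∫ ξ, g ξ * F ξ ∂μ := by
    rw [key h hh, key g hg]
    congr 1
    refine Finset.sum_congr rfl fun i _ => ?_
    refine integral_congr_ae ?_
    filter_upwards [hmarg i] with x hx
    rw [hx]
  have hT : ∫ ξ, h ξ * F ξ ∂μ = ∫ ξ, ‖F ξ‖ ^ q ∂μ := by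
    refine integral_congr_ae (Filter.Eventually.of_forall fun ξ => ?_)
    beta_reduce
    rw [hprod ξ, Real.norm_eq_abs]
  have hHolder : ∫ ξ, g ξ * F ξ ∂μ
      ≤ (∫ ξ, ‖g ξ‖ ^ p ∂μ) ^ (1/p) * (∫ ξ, ‖F ξ‖ ^ q ∂μ) ^ (1/q) := by
    calc ∫ ξ, g ξ * F ξ ∂μ ≤ ‖∫ ξ, g ξ * F ξ ∂μ‖ := le_abs_self _
      _ ≤ ∫ ξ, ‖g ξ * F ξ‖ ∂μ := norm_integral_le_integral_norm _
      _ = ∫ ξ, ‖g ξ‖ * ‖F ξ‖ ∂μ := by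
          refine integral_congr_ae (Filter.Eventually.of_forall fun ξ => ?_)
          beta_reduce
          rw [norm_mul]
      _ ≤ _ := integral_mul_norm_le_Lp_mul_Lq hpq hg hFq
  set T := ∫ ξ, ‖F ξ‖ ^ q ∂μ with hTdef
  set G := ∫ ξ, ‖g ξ‖ ^ p ∂μ with hGdef
  have hT0 : (0:ℝ) ≤ T := integral_nonneg fun ξ => Real.rpow_nonneg (norm_nonneg _) _
  have hG0 : (0:ℝ) ≤ G := integral_nonneg fun ξ => Real.rpow_nonneg (norm_nonneg _) _
  have hTG : T ≤ G ^ (1/p) * T ^ (1/q) := by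
    calc T = ∫ ξ, h ξ * F ξ ∂μ := hT.symm
      _ = ∫ ξ, g ξ * F ξ ∂μ := hsame
      _ ≤ _ := hHolder
  have hsum1 : 1/p + 1/q = 1 := by rw [one_div, one_div]; exact hpq.inv_add_inv_eq_one
  have hmain : T ≤ G := by
    rcases eq_or_lt_of_le hT0 with h0 | h0
    · exact h0 ▸ hG0
    · have hTq : 0 < T ^ (1/q) := Real.rpow_pos_of_pos h0 _
      have h1 : T ^ (1/p) ≤ G ^ (1/p) := by
        have h3 : T ^ (1/p) * T ^ (1/q) = T := by
          rw [← Real.rpow_add h0, hsum1, Real.rpow_one]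
        exact le_of_mul_le_mul_right (by rw [h3]; exact hTG) hTq
      have h4 := Real.rpow_le_rpow (Real.rpow_nonneg hT0 _) h1 hp0.le
      rwa [← Real.rpow_mul hT0, ← Real.rpow_mul hG0, one_div_mul_cancel (ne_of_gt hp0),
        Real.rpow_one, Real.rpow_one] at h4
  have hhp_int : Integrable (fun ξ => ‖h ξ‖ ^ p) μ := by
    have := hh.integrable_norm_rpow hpne hpnetop
    simpa [ENNReal.toReal_ofReal hp0.le] using this
  have hgp_int : Integrable (fun ξ => ‖g ξ‖ ^ p) μ := by
    have := hg.integrable_norm_rpow hpne hpnetop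
    simpa [ENNReal.toReal_ofReal hp0.le] using this
  have hlint_h : ∫⁻ ξ, (‖h ξ‖₊ : ℝ≥0∞) ^ p ∂μ = ENNReal.ofReal T := by
    have h5 : ∫ ξ, ‖h ξ‖ ^ p ∂μ = T :=
      integral_congr_ae (Filter.Eventually.of_forall fun ξ => hpow ξ)
    rw [← h5, ofReal_integral_eq_lintegral_ofReal hhp_int
      (Filter.Eventually.of_forall fun ξ => Real.rpow_nonneg (norm_nonneg _) _)]
    refine lintegral_congr fun ξ => ?_
    rw [← enorm_eq_nnnorm, ← ofReal_norm, ENNReal.ofReal_rpow_of_nonneg (norm_nonneg _) hp0.le]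
  have hlint_g : ∫⁻ ξ, (‖g ξ‖₊ : ℝ≥0∞) ^ p ∂μ = ENNReal.ofReal G := by
    rw [hGdef, ofReal_integral_eq_lintegral_ofReal hgp_int
      (Filter.Eventually.of_forall fun ξ => Real.rpow_nonneg (norm_nonneg _) _)]
    refine lintegral_congr fun ξ => ?_
    rw [← enorm_eq_nnnorm, ← ofReal_norm, ENNReal.ofReal_rpow_of_nonneg (norm_nonneg _) hp0.le]
  have hle : eLpNorm h (ENNReal.ofReal p) μ ≤ eLpNorm g (ENNReal.ofReal p) μ := by
    rw [eLpNorm_eq_lintegral_rpow_enorm_toReal hpne hpnetop,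
      eLpNorm_eq_lintegral_rpow_enorm_toReal hpne hpnetop, ENNReal.toReal_ofReal hp0.le]
    simp only [enorm_eq_nnnorm]
    rw [hlint_h, hlint_g]
    exact ENNReal.rpow_le_rpow (ENNReal.ofReal_le_ofReal hmain) (by positivity)
  rw [heLp]
  exact ENNReal.rpow_le_rpow hle hp1.le
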